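/- For all n ≥ 0, the nth Schröder number satisfies r_n = 2^n + Σ_{k=1}^{n−1} 2^k · c(n,k), where c(n,k) is the number of partitions λ = (λ_1 ≥ λ_2 ≥ ⋯ ≥ λ_n ≥ 0) with λ_i ≤ n+1−i for all i, having exactly k indices i with λ_i > λ_{i+1} (setting λ_{n+1} := 0) and i + λ_i < n+1. -/

import Mathlib

/-- The large Schröder numbers: `r 0 = 1` and
`r n = r (n-1) + ∑_{i=0}^{n-1} r i * r (n-1-i)` for `n ≥ 1`. -/
def schroeder : ℕ → ℕ
  | 0 => 1
  | n + 1 => schroeder n + ∑ i ∈ (Finset.range (n + 1)).attach,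
      schroeder i.1 * schroeder (n - i.1)
decreasing_by
  · exact Nat.lt_succ_self n
  · exact Nat.lt_succ_of_le (Nat.le_of_lt_succ (Finset.mem_range.mp i.2))
  · exact Nat.lt_succ_of_le (Nat.sub_le n i.1)

/-- `c n k`: the number of Young diagrams fitting in the staircase `(n, n-1, …, 1)`
(encoded as antitone `f : ℕ → ℕ` with `f i ≤ n - i`, where `f i` is the part `λ_{i+1}`)
having exactly `k` corners `(i, λ_i)` (with `λ_i > λ_{i+1}`) satisfying `i + λ_i < n + 1`. -/
noncomputable def lowCornerCount (n k : ℕ) : ℕ :=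
  Nat.card {f : ℕ → ℕ // Antitone f ∧ (∀ i, f i ≤ n - i) ∧
    {i : ℕ | f (i + 1) < f i ∧ (i + 1) + f i < n + 1}.ncard = k}

/-!
Weight each Young diagram in the staircase `δ_n` by `a ^ (number of low corners)` and let
`F_a(n, m) = cornerWeight a n m` be the total weight of those with first part at most `m`.
Removing the first row shows that `F_a` obeys a lattice-path recursion in `(n, m)`: the new
corner `(1, λ_1)` is low exactly when `λ_1 ≤ n` and `λ_1 > λ_2`. For `a = 2` this is the
recursion of Schröder paths below the diagonal, whose last-return decomposition gives
`F_2(n, n) = r_n`; for `a = 0` the table doubles along the diagonal, so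
`c(n, 0) = F_0(n, n) = 2^n`. Expanding `F_2(n, n)` by the number of low corners gives the formula.
-/

open Finset

theorem schroeder_succ (n : ℕ) :
    schroeder (n + 1) = schroeder n + ∑ p ∈ antidiagonal n, schroeder p.1 * schroeder p.2 := by
  rw [schroeder, sum_attach (range (n + 1)) fun i => schroeder i * schroeder (n - i),
    Nat.sum_antidiagonal_eq_sum_range_succ fun i j => schroeder i * schroeder j]

theorem eq_schroeder_of_recurrence {R : Type*} [Semiring R] {s : ℕ → R} (h_zero : s 0 = 1)
    (h_succ : ∀ n, s (n + 1) = s n + ∑ p ∈ antidiagonal n, s p.1 * s p.2) (n : ℕ) :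
    s n = schroeder n := by
  induction n using Nat.strong_induction_on with
  | _ n ih =>
    rcases n with _ | n
    · simp [h_zero, schroeder]
    · rw [h_succ, schroeder_succ, Nat.cast_add, Nat.cast_sum, ih n n.lt_succ_self]
      congr 1
      refine sum_congr rfl fun p hp => ?_
      rw [Nat.cast_mul, ih p.1 (Nat.antidiagonal.fst_lt hp), ih p.2 (Nat.antidiagonal.snd_lt hp)]

/-- The recursion satisfied by the number `H m d` of lattice paths from `(0, 0)` to `(m + d, m)`
with steps `(1, 0)`, `(0, 1)`, `(1, 1)` that never go above the diagonal. -/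
structure IsSchroederPathCount {R : Type*} [Semiring R] (H : ℕ → ℕ → R) : Prop where
  zero_left : ∀ d, H 0 d = 1
  succ_zero : ∀ m, H (m + 1) 0 = H m 1 + H m 0
  succ_succ : ∀ m d, H (m + 1) (d + 1) = H m (d + 2) + H (m + 1) d + H m (d + 1)

namespace IsSchroederPathCount

variable {R : Type*} [Semiring R] {H : ℕ → ℕ → R}

/-- Split a path ending strictly below the diagonal at its last visit `(i, i)` to the diagonal. -/
theorem apply_succ_eq_sum (hH : IsSchroederPathCount H) (m d : ℕ) :
    H m (d + 1) = ∑ p ∈ antidiagonal m, H p.1 0 * H p.2 d := by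
  induction m generalizing d with
  | zero => simp [hH.zero_left]
  | succ m ihm =>
    rw [Nat.sum_antidiagonal_succ', hH.zero_left, mul_one]
    induction d with
    | zero =>
      simp only [hH.succ_succ, hH.succ_zero, ihm, mul_add, sum_add_distrib]
      abel
    | succ d ihd =>
      dsimp only at ihd ⊢
      rw [hH.succ_succ m (d + 1), ihd, ihm, ihm]
      simp only [hH.succ_succ, mul_add, sum_add_distrib]
      abel

theorem apply_zero_eq_schroeder (hH : IsSchroederPathCount H) (n : ℕ) : H n 0 = schroeder n :=
  eq_schroeder_of_recurrence (s := (H · 0)) (hH.zero_left 0)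
    (fun n => by rw [hH.succ_zero, hH.apply_succ_eq_sum, add_comm]) n

end IsSchroederPathCount

namespace StaircaseDiagram

def cons (t : ℕ) (f : ℕ → ℕ) : ℕ → ℕ
  | 0 => t
  | i + 1 => f i

theorem cons_injective (t : ℕ) : Function.Injective (cons t) :=
  fun _ _ h => funext fun i => congrFun h (i + 1)

open Classical in
noncomputable def diagrams : ℕ → ℕ → Finset (ℕ → ℕ)
  | 0, _ => {0}
  | n + 1, m => (range (min m (n + 1) + 1)).biUnion fun t =>
      (diagrams n t).map ⟨cons t, cons_injective t⟩

theorem mem_diagrams {n m : ℕ} {f : ℕ → ℕ} :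
    f ∈ diagrams n m ↔ Antitone f ∧ (∀ i, f i ≤ n - i) ∧ f 0 ≤ m := by
  induction n generalizing m f with
  | zero =>
    simp only [diagrams, mem_singleton]
    constructor
    · rintro rfl
      exact ⟨antitone_const, fun _ => by simp, by simp⟩
    · rintro ⟨-, hf, -⟩
      funext i
      simpa using hf i
  | succ n ih =>
    simp only [diagrams, mem_biUnion, mem_map, mem_range, Function.Embedding.coeFn_mk, ih]
    constructor
    · rintro ⟨t, ht, g, ⟨hg, hgn, hg0⟩, rfl⟩
      refine ⟨antitone_nat_of_succ_le fun i => ?_, fun i => ?_, by simp [cons]; omega⟩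
      · cases i with
        | zero => exact hg0
        | succ i => exact hg i.le_succ
      · cases i with
        | zero => simp [cons]; omega
        | succ i => simpa [cons] using hgn i
    · rintro ⟨hf, hfn, hf0⟩
      refine ⟨f 0, by have := hfn 0; omega, (f <| · + 1), ⟨fun i j hij => hf (by omega),
        fun i => by simpa using hfn (i + 1), hf (by omega)⟩, ?_⟩
      funext i
      cases i <;> rfl

theorem diagrams_zero_right (n : ℕ) : diagrams n 0 = {0} := by
  ext f
  simp only [mem_diagrams, mem_singleton, nonpos_iff_eq_zero]
  constructor
  · rintro ⟨hf, -, hf0⟩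
    funext i
    simpa [hf0] using hf (Nat.zero_le i)
  · rintro rfl
    exact ⟨antitone_const, fun _ => by simp, rfl⟩

theorem diagrams_succ_self (n : ℕ) : diagrams n (n + 1) = diagrams n n := by
  ext f
  simp only [mem_diagrams]
  exact and_congr_right fun _ =>
    ⟨fun ⟨hn, _⟩ => ⟨hn, by simpa using hn 0⟩, fun ⟨hn, _⟩ => ⟨hn, by omega⟩⟩

theorem filter_diagrams_succ (n m : ℕ) :
    {g ∈ diagrams n (m + 1) | g 0 ≤ m} = diagrams n m := by
  ext g
  simp only [mem_filter, mem_diagrams]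
  exact ⟨fun ⟨⟨hf, hn, _⟩, h⟩ => ⟨hf, hn, h⟩,
    fun ⟨hf, hn, h⟩ => ⟨⟨hf, hn, by omega⟩, h⟩⟩

def lowCorners (n : ℕ) (f : ℕ → ℕ) : ℕ :=
  #{i ∈ range n | f (i + 1) < f i ∧ i + 1 + f i < n + 1}

theorem lowCorners_cons (n t : ℕ) (g : ℕ → ℕ) :
    lowCorners (n + 1) (cons t g) = lowCorners n g + if g 0 < t ∧ t < n + 1 then 1 else 0 := by
  rw [lowCorners, lowCorners, card_filter, card_filter, sum_range_succ']
  simp only [cons, zero_add]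
  congr 1
  · refine sum_congr rfl fun i _ => if_congr (and_congr_right fun _ => by omega) rfl rfl
  · exact if_congr (and_congr_right fun _ => by omega) rfl rfl

theorem lowCorners_le (n : ℕ) (f : ℕ → ℕ) : lowCorners n f ≤ n - 1 := by
  calc lowCorners n f ≤ #(range (n - 1)) := card_le_card fun i hi => by
        simp only [mem_filter, mem_range] at hi ⊢
        omega
    _ = n - 1 := card_range _

noncomputable def cornerWeight (a n m : ℕ) : ℕ :=
  ∑ f ∈ diagrams n m, a ^ lowCorners n f

variable (a : ℕ)

open Classical in
theorem cornerWeight_succ {n m : ℕ} (h : m ≤ n + 1) :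
    cornerWeight a (n + 1) m = ∑ t ∈ range (m + 1), ∑ g ∈ diagrams n t,
      a ^ lowCorners n g * if g 0 < t ∧ t < n + 1 then a else 1 := by
  rw [cornerWeight, diagrams, min_eq_left h, sum_biUnion]
  · refine sum_congr rfl fun t _ => ?_
    rw [sum_map]
    refine sum_congr rfl fun g _ => ?_
    simp only [Function.Embedding.coeFn_mk, lowCorners_cons, pow_add]
    split_ifs <;> simp
  · intro t _ t' _ hne
    simp only [Function.onFun, disjoint_left, mem_map, Function.Embedding.coeFn_mk]
    rintro _ ⟨g, -, rfl⟩ ⟨g', -, h⟩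
    exact hne (congrFun h 0).symm

theorem cornerWeight_zero_right (n : ℕ) : cornerWeight a n 0 = 1 := by
  simp [cornerWeight, diagrams_zero_right, lowCorners]

theorem cornerWeight_succ_right (n m : ℕ) :
    cornerWeight a n (m + 1) =
      cornerWeight a n m + ∑ g ∈ diagrams n (m + 1) with ¬g 0 ≤ m, a ^ lowCorners n g := by
  rw [cornerWeight, ← sum_filter_add_sum_filter_not _ (fun g => g 0 ≤ m), filter_diagrams_succ,
    cornerWeight]

theorem cornerWeight_succ_self (n : ℕ) :
    cornerWeight a (n + 1) (n + 1) = cornerWeight a (n + 1) n + cornerWeight a n n := by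
  rw [cornerWeight_succ a le_rfl, sum_range_succ, ← cornerWeight_succ a n.le_succ,
    diagrams_succ_self]
  simp [cornerWeight]

theorem cornerWeight_succ_succ_add {n m : ℕ} (h : m < n) :
    cornerWeight a (n + 1) (m + 1) + cornerWeight a n m =
      cornerWeight a (n + 1) m + a * cornerWeight a n m + cornerWeight a n (m + 1) := by
  have last_row : ∑ g ∈ diagrams n (m + 1),
      a ^ lowCorners n g * (if g 0 < m + 1 ∧ m + 1 < n + 1 then a else 1) =
      a * cornerWeight a n m +
        ∑ g ∈ diagrams n (m + 1) with ¬g 0 ≤ m, a ^ lowCorners n g := by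
    rw [← sum_filter_add_sum_filter_not _ (fun g => g 0 ≤ m), filter_diagrams_succ,
      cornerWeight, mul_sum]
    congr 1 <;> refine sum_congr rfl fun g hg => ?_
    · have := (mem_diagrams.1 hg).2.2
      rw [if_pos (by omega), mul_comm]
    · have := (mem_filter.1 hg).2
      rw [if_neg (by omega), mul_one]
  rw [cornerWeight_succ a (by omega : m + 1 ≤ n + 1), sum_range_succ,
    ← cornerWeight_succ a (by omega), last_row, cornerWeight_succ_right]
  ring

theorem cornerWeight_zero_succ {n m : ℕ} (h : m ≤ n) :
    cornerWeight 0 (n + 1) m = cornerWeight 0 n m := by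
  induction m with
  | zero => rw [cornerWeight_zero_right, cornerWeight_zero_right]
  | succ m ih =>
    have := cornerWeight_succ_succ_add 0 h
    rw [ih (by omega), zero_mul, add_zero] at this
    omega

theorem cornerWeight_zero_self (n : ℕ) : cornerWeight 0 n n = 2 ^ n := by
  induction n with
  | zero => exact cornerWeight_zero_right 0 0
  | succ n ih => rw [cornerWeight_succ_self, cornerWeight_zero_succ le_rfl, ih, pow_succ, mul_two]

theorem isSchroederPathCount_cornerWeight_two :
    IsSchroederPathCount fun m d => cornerWeight 2 (m + d) m where
  zero_left d := cornerWeight_zero_right 2 _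
  succ_zero m := by simpa only [add_zero] using cornerWeight_succ_self 2 m
  succ_succ m d := by
    have := cornerWeight_succ_succ_add 2 (by omega : m < m + d + 1)
    simp only [show m + 1 + (d + 1) = m + d + 1 + 1 by omega,
      show m + (d + 2) = m + d + 1 + 1 by omega, show m + 1 + d = m + d + 1 by omega,
      show m + (d + 1) = m + d + 1 by omega]
    omega

theorem cornerWeight_two_self (n : ℕ) : cornerWeight 2 n n = schroeder n := by
  simpa using isSchroederPathCount_cornerWeight_two.apply_zero_eq_schroeder n

theorem ncard_lowCornerSet (n : ℕ) (f : ℕ → ℕ) :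
    {i | f (i + 1) < f i ∧ i + 1 + f i < n + 1}.ncard = lowCorners n f := by
  rw [lowCorners, ← Set.ncard_coe_finset]
  congr 1
  ext i
  simp only [Set.mem_ofPred_eq, coe_filter, mem_range]
  omega

theorem lowCornerCount_eq_card (n k : ℕ) :
    lowCornerCount n k = #{f ∈ diagrams n n | lowCorners n f = k} := by
  rw [lowCornerCount, ← Nat.card_eq_finsetCard]
  refine Nat.card_congr (Equiv.subtypeEquivRight fun f => ?_)
  simp only [mem_filter, mem_diagrams, ncard_lowCornerSet]
  exact ⟨fun ⟨hf, hn, hk⟩ => ⟨⟨hf, hn, by simpa using hn 0⟩, hk⟩,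
    fun ⟨⟨hf, hn, _⟩, hk⟩ => ⟨hf, hn, hk⟩⟩

theorem sum_filter_lowCorners_eq (n k : ℕ) :
    ∑ f ∈ diagrams n n with lowCorners n f = k, a ^ lowCorners n f =
      a ^ k * lowCornerCount n k := by
  rw [lowCornerCount_eq_card, mul_comm, ← smul_eq_mul, ← sum_const]
  exact sum_congr rfl fun f hf => by rw [(mem_filter.1 hf).2]

theorem cornerWeight_self_eq_sum (n : ℕ) :
    cornerWeight a n n =
      lowCornerCount n 0 + ∑ k ∈ Icc 1 (n - 1), a ^ k * lowCornerCount n k := by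
  have range_eq : range (n - 1 + 1) = insert 0 (Icc 1 (n - 1)) := by
    ext k
    simp only [mem_range, mem_insert, mem_Icc]
    omega
  rw [cornerWeight, ← sum_fiberwise_of_maps_to (t := range (n - 1 + 1))
    fun f _ => mem_range.2 (Nat.lt_succ_of_le (lowCorners_le n f)), range_eq,
    sum_insert (by simp)]
  simp only [sum_filter_lowCorners_eq, pow_zero, one_mul]

theorem lowCornerCount_zero (n : ℕ) : lowCornerCount n 0 = 2 ^ n := by
  rw [← cornerWeight_zero_self, cornerWeight_self_eq_sum, sum_eq_zero, add_zero]
  intro k hk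
  rw [zero_pow (by simp at hk; omega), zero_mul]

end StaircaseDiagram

/-- `r_n = 2^n + ∑_{k=1}^{n-1} 2^k c(n,k)`. -/
theorem schroeder_eq_sum_low_corners (n : ℕ) :
    schroeder n = 2 ^ n + ∑ k ∈ Finset.Icc 1 (n - 1), 2 ^ k * lowCornerCount n k := by
  rw [← StaircaseDiagram.cornerWeight_two_self, StaircaseDiagram.cornerWeight_self_eq_sum,
    StaircaseDiagram.lowCornerCount_zero]
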